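/- Let I ⊆ ℝ∖{0,1} be an open interval and F₁₂, F₁₃, F₂₃ : I → ℝ differentiable functions. Let U = {(u¹,u²,u³) ∈ ℝ³ : u¹,u²,u³ pairwise distinct, (u³−u¹)/(u²−u¹) ∈ I}, and on U define β₁₂ = F₁₂(z)/(u²−u¹), β₁₃ = F₁₃(z)/(u³−u¹), β₂₃ = F₂₃(z)/(u³−u²), where z = (u³−u¹)/(u²−u¹), extended symmetrically by βⱼᵢ = βᵢⱼ. Then the Darboux–Egorov equations ∂ₖβᵢⱼ = βᵢₖβₖⱼ hold on U for all pairwise distinct i,j,k ∈ {1,2,3} if and only if on I: F₁₂′(z) = F₁₃(z)F₂₃(z)/(z(z−1)), F₁₃′(z) = −F₁₂(z)F₂₃(z)/(z−1), and F₂₃′(z) = F₁₂(z)F₁₃(z)/z. -/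
import Mathlib


/-- Partial derivative of `g : ℝ³ → ℝ` with respect to the `i`-th coordinate. -/
noncomputable def pd3 (g : (Fin 3 → ℝ) → ℝ) (i : Fin 3) (u : Fin 3 → ℝ) : ℝ :=
  deriv (fun t => g (Function.update u i t)) (u i)

/-- The rotation coefficients `β i j` defined from one-variable functions
`F₁₂, F₁₃, F₂₃` via `β₁₂ = F₁₂(z)/(u²-u¹)`, `β₁₃ = F₁₃(z)/(u³-u¹)`,
`β₂₃ = F₂₃(z)/(u³-u²)` with `z = (u³-u¹)/(u²-u¹)`, extended symmetrically.
(Indices are 0-based: `u 0 = u¹`, `u 1 = u²`, `u 2 = u³`.) -/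
noncomputable def rotCoeff (F12 F13 F23 : ℝ → ℝ) (i j : Fin 3) (u : Fin 3 → ℝ) : ℝ :=
  if (i = 0 ∧ j = 1) ∨ (i = 1 ∧ j = 0) then
    F12 ((u 2 - u 0) / (u 1 - u 0)) / (u 1 - u 0)
  else if (i = 0 ∧ j = 2) ∨ (i = 2 ∧ j = 0) then
    F13 ((u 2 - u 0) / (u 1 - u 0)) / (u 2 - u 0)
  else if (i = 1 ∧ j = 2) ∨ (i = 2 ∧ j = 1) then
    F23 ((u 2 - u 0) / (u 1 - u 0)) / (u 2 - u 1)
  else 0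

lemma rotCoeff_comm (F12 F13 F23 : ℝ → ℝ) (i j : Fin 3) :
    rotCoeff F12 F13 F23 i j = rotCoeff F12 F13 F23 j i := by
  funext u; fin_cases i <;> fin_cases j <;> simp [rotCoeff]

lemma pdA (F12 F13 F23 : ℝ → ℝ) (u : Fin 3 → ℝ) (h : u 1 - u 0 ≠ 0) (f' : ℝ)
    (hd : HasDerivAt F12 f' ((u 2 - u 0) / (u 1 - u 0))) :
    pd3 (rotCoeff F12 F13 F23 0 1) 2 u = f' / (u 1 - u 0) ^ 2 := by
  have hfun : (fun t => rotCoeff F12 F13 F23 0 1 (Function.update u 2 t))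
      = fun t => F12 ((t - u 0) / (u 1 - u 0)) / (u 1 - u 0) := by
    funext t; simp [rotCoeff, Function.update]
  have hinner : HasDerivAt (fun t => (t - u 0) / (u 1 - u 0)) (1 / (u 1 - u 0)) (u 2) := by
    simpa using ((hasDerivAt_id (u 2)).sub_const (u 0)).div_const (u 1 - u 0)
  have hder : HasDerivAt (fun t => F12 ((t - u 0) / (u 1 - u 0)) / (u 1 - u 0))
      (f' * (1 / (u 1 - u 0)) / (u 1 - u 0)) (u 2) := (hd.comp (u 2) hinner).div_const _
  rw [pd3, hfun, hder.deriv, mul_one_div, div_div, ← pow_two]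

lemma pdB (F12 F13 F23 : ℝ → ℝ) (u : Fin 3 → ℝ) (h : u 1 - u 0 ≠ 0) (h2 : u 2 - u 0 ≠ 0)
    (f' : ℝ) (hd : HasDerivAt F13 f' ((u 2 - u 0) / (u 1 - u 0))) :
    pd3 (rotCoeff F12 F13 F23 0 2) 1 u = -f' / (u 1 - u 0) ^ 2 := by
  have hfun : (fun t => rotCoeff F12 F13 F23 0 2 (Function.update u 1 t))
      = fun t => F13 ((u 2 - u 0) / (t - u 0)) / (u 2 - u 0) := by
    funext t; simp [rotCoeff, Function.update]
  have hsub : HasDerivAt (fun t : ℝ => t - u 0) 1 (u 1) := by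
    simpa using (hasDerivAt_id (u 1)).sub_const (u 0)
  have hinner : HasDerivAt (fun t => (u 2 - u 0) / (t - u 0))
      (-(u 2 - u 0) / (u 1 - u 0) ^ 2) (u 1) :=
    ((hasDerivAt_const (u 1) (u 2 - u 0)).div hsub h).congr_deriv (by ring)
  have hder : HasDerivAt (fun t => F13 ((u 2 - u 0) / (t - u 0)) / (u 2 - u 0))
      (f' * (-(u 2 - u 0) / (u 1 - u 0) ^ 2) / (u 2 - u 0)) (u 1) :=
    (hd.comp (u 1) hinner).div_const _
  rw [pd3, hfun, hder.deriv]
  field_simp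

lemma pdC (F12 F13 F23 : ℝ → ℝ) (u : Fin 3 → ℝ) (h : u 1 - u 0 ≠ 0) (h3 : u 2 - u 1 ≠ 0)
    (f' : ℝ) (hd : HasDerivAt F23 f' ((u 2 - u 0) / (u 1 - u 0))) :
    pd3 (rotCoeff F12 F13 F23 1 2) 0 u = f' / (u 1 - u 0) ^ 2 := by
  have hfun : (fun t => rotCoeff F12 F13 F23 1 2 (Function.update u 0 t))
      = fun t => F23 ((u 2 - t) / (u 1 - t)) / (u 2 - u 1) := by
    funext t; simp [rotCoeff, Function.update]
  have hnum : HasDerivAt (fun t : ℝ => u 2 - t) (-1) (u 0) := by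
    simpa using (hasDerivAt_id (u 0)).const_sub (u 2)
  have hden : HasDerivAt (fun t : ℝ => u 1 - t) (-1) (u 0) := by
    simpa using (hasDerivAt_id (u 0)).const_sub (u 1)
  have hinner : HasDerivAt (fun t => (u 2 - t) / (u 1 - t))
      ((u 2 - u 1) / (u 1 - u 0) ^ 2) (u 0) :=
    (hnum.div hden h).congr_deriv (by ring)
  have hder : HasDerivAt (fun t => F23 ((u 2 - t) / (u 1 - t)) / (u 2 - u 1))
      (f' * ((u 2 - u 1) / (u 1 - u 0) ^ 2) / (u 2 - u 1)) (u 0) :=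
    (hd.comp (u 0) hinner).div_const _
  rw [pd3, hfun, hder.deriv]
  field_simp

section eqv

variable (F12 F13 F23 : ℝ → ℝ) (u : Fin 3 → ℝ)

lemma eqvA (h01 : u 0 ≠ u 1) (h02 : u 0 ≠ u 2) (h12 : u 1 ≠ u 2)
    (hd : DifferentiableAt ℝ F12 ((u 2 - u 0) / (u 1 - u 0))) :
    (pd3 (rotCoeff F12 F13 F23 0 1) 2 u
        = rotCoeff F12 F13 F23 0 2 u * rotCoeff F12 F13 F23 2 1 u)
    ↔ deriv F12 ((u 2 - u 0) / (u 1 - u 0))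
        = F13 ((u 2 - u 0) / (u 1 - u 0)) * F23 ((u 2 - u 0) / (u 1 - u 0))
          / (((u 2 - u 0) / (u 1 - u 0)) * (((u 2 - u 0) / (u 1 - u 0)) - 1)) := by
  set z := (u 2 - u 0) / (u 1 - u 0) with hz
  have hd1 : u 1 - u 0 ≠ 0 := sub_ne_zero.mpr h01.symm
  have hd2 : u 2 - u 0 ≠ 0 := sub_ne_zero.mpr h02.symm
  have hd3 : u 2 - u 1 ≠ 0 := sub_ne_zero.mpr h12.symm
  have hz0 : z ≠ 0 := div_ne_zero hd2 hd1
  have hz1 : z - 1 ≠ 0 := by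
    rw [hz]; intro hh
    apply hd3
    have : (u 2 - u 0) / (u 1 - u 0) = 1 := by linarith [sub_eq_zero.mp hh]
    have := (div_eq_one_iff_eq hd1).mp this
    linarith
  rw [pdA F12 F13 F23 u hd1 _ hd.hasDerivAt]
  have v1 : rotCoeff F12 F13 F23 0 2 u = F13 z / (u 2 - u 0) := by simp [rotCoeff, hz]
  have v2 : rotCoeff F12 F13 F23 2 1 u = F23 z / (u 2 - u 1) := by simp [rotCoeff, hz]
  have e2 : u 2 - u 0 = z * (u 1 - u 0) := by
    rw [hz]; exact (div_mul_cancel₀ _ hd1).symm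
  have e3 : u 2 - u 1 = (z - 1) * (u 1 - u 0) := by
    rw [hz, sub_mul, one_mul, div_mul_cancel₀ _ hd1]; ring
  rw [v1, v2, e2, e3]
  have key : F13 z / (z * (u 1 - u 0)) * (F23 z / ((z - 1) * (u 1 - u 0)))
      = (F13 z * F23 z / (z * (z - 1))) / (u 1 - u 0) ^ 2 := by
    rw [div_mul_div_comm, div_div]; congr 1; ring
  rw [key, div_left_inj' (pow_ne_zero 2 hd1)]

lemma eqvB (h01 : u 0 ≠ u 1) (h02 : u 0 ≠ u 2) (h12 : u 1 ≠ u 2)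
    (hd : DifferentiableAt ℝ F13 ((u 2 - u 0) / (u 1 - u 0))) :
    (pd3 (rotCoeff F12 F13 F23 0 2) 1 u
        = rotCoeff F12 F13 F23 0 1 u * rotCoeff F12 F13 F23 1 2 u)
    ↔ deriv F13 ((u 2 - u 0) / (u 1 - u 0))
        = -(F12 ((u 2 - u 0) / (u 1 - u 0)) * F23 ((u 2 - u 0) / (u 1 - u 0)))
          / (((u 2 - u 0) / (u 1 - u 0)) - 1) := by
  set z := (u 2 - u 0) / (u 1 - u 0) with hz
  have hd1 : u 1 - u 0 ≠ 0 := sub_ne_zero.mpr h01.symm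
  have hd2 : u 2 - u 0 ≠ 0 := sub_ne_zero.mpr h02.symm
  have hd3 : u 2 - u 1 ≠ 0 := sub_ne_zero.mpr h12.symm
  have hz1 : z - 1 ≠ 0 := by
    rw [hz]; intro hh
    apply hd3
    have : (u 2 - u 0) / (u 1 - u 0) = 1 := by linarith [sub_eq_zero.mp hh]
    have := (div_eq_one_iff_eq hd1).mp this
    linarith
  rw [pdB F12 F13 F23 u hd1 hd2 _ hd.hasDerivAt]
  have v1 : rotCoeff F12 F13 F23 0 1 u = F12 z / (u 1 - u 0) := by simp [rotCoeff, hz]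
  have v2 : rotCoeff F12 F13 F23 1 2 u = F23 z / (u 2 - u 1) := by simp [rotCoeff, hz]
  have e3 : u 2 - u 1 = (z - 1) * (u 1 - u 0) := by
    rw [hz, sub_mul, one_mul, div_mul_cancel₀ _ hd1]; ring
  rw [v1, v2, e3]
  have key : F12 z / (u 1 - u 0) * (F23 z / ((z - 1) * (u 1 - u 0)))
      = (F12 z * F23 z / (z - 1)) / (u 1 - u 0) ^ 2 := by
    rw [div_mul_div_comm, div_div]; congr 1; ring
  have hnd : -(F12 z * F23 z) / (z - 1) = -(F12 z * F23 z / (z - 1)) := neg_div _ _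
  rw [key, hnd, neg_div, neg_eq_iff_eq_neg, ← neg_div,
    div_left_inj' (pow_ne_zero 2 hd1)]

lemma eqvC (h01 : u 0 ≠ u 1) (h02 : u 0 ≠ u 2) (h12 : u 1 ≠ u 2)
    (hd : DifferentiableAt ℝ F23 ((u 2 - u 0) / (u 1 - u 0))) :
    (pd3 (rotCoeff F12 F13 F23 1 2) 0 u
        = rotCoeff F12 F13 F23 1 0 u * rotCoeff F12 F13 F23 0 2 u)
    ↔ deriv F23 ((u 2 - u 0) / (u 1 - u 0))
        = F12 ((u 2 - u 0) / (u 1 - u 0)) * F13 ((u 2 - u 0) / (u 1 - u 0))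
          / ((u 2 - u 0) / (u 1 - u 0)) := by
  set z := (u 2 - u 0) / (u 1 - u 0) with hz
  have hd1 : u 1 - u 0 ≠ 0 := sub_ne_zero.mpr h01.symm
  have hd2 : u 2 - u 0 ≠ 0 := sub_ne_zero.mpr h02.symm
  have hd3 : u 2 - u 1 ≠ 0 := sub_ne_zero.mpr h12.symm
  have hz0 : z ≠ 0 := div_ne_zero hd2 hd1
  rw [pdC F12 F13 F23 u hd1 hd3 _ hd.hasDerivAt]
  have v1 : rotCoeff F12 F13 F23 1 0 u = F12 z / (u 1 - u 0) := by simp [rotCoeff, hz]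
  have v2 : rotCoeff F12 F13 F23 0 2 u = F13 z / (u 2 - u 0) := by simp [rotCoeff, hz]
  have e2 : u 2 - u 0 = z * (u 1 - u 0) := by
    rw [hz]; exact (div_mul_cancel₀ _ hd1).symm
  rw [v1, v2, e2]
  have key : F12 z / (u 1 - u 0) * (F13 z / (z * (u 1 - u 0)))
      = (F12 z * F13 z / z) / (u 1 - u 0) ^ 2 := by
    rw [div_mul_div_comm, div_div]; congr 1; ring
  rw [key, div_left_inj' (pow_ne_zero 2 hd1)]

end eqv

/-- the Darboux–Egorov equations `∂ₖβᵢⱼ = βᵢₖβₖⱼ` for the rotation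
coefficients built from `F₁₂, F₁₃, F₂₃` hold on
`U = {u : coordinates pairwise distinct, z ∈ I}` iff the functions satisfy the
reduced ODE system on `I`. -/
theorem stmt_1 (I : Set ℝ) (hIopen : IsOpen I) (hIconn : I.OrdConnected)
    (h0 : (0 : ℝ) ∉ I) (h1 : (1 : ℝ) ∉ I)
    (F12 F13 F23 : ℝ → ℝ)
    (hF12 : DifferentiableOn ℝ F12 I)
    (hF13 : DifferentiableOn ℝ F13 I)
    (hF23 : DifferentiableOn ℝ F23 I) :
    (∀ u : Fin 3 → ℝ,
        (u 0 ≠ u 1 ∧ u 0 ≠ u 2 ∧ u 1 ≠ u 2 ∧ (u 2 - u 0) / (u 1 - u 0) ∈ I) →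
        ∀ i j k : Fin 3, i ≠ j → j ≠ k → i ≠ k →
          pd3 (rotCoeff F12 F13 F23 i j) k u
            = rotCoeff F12 F13 F23 i k u * rotCoeff F12 F13 F23 k j u)
    ↔
    (∀ z ∈ I,
        deriv F12 z = F13 z * F23 z / (z * (z - 1)) ∧
        deriv F13 z = -(F12 z * F23 z) / (z - 1) ∧
        deriv F23 z = F12 z * F13 z / z) := by
  constructor
  · intro h z hz
    have hz0 : z ≠ 0 := fun hh => h0 (hh ▸ hz)
    have hz1 : z ≠ 1 := fun hh => h1 (hh ▸ hz)
    set u : Fin 3 → ℝ := ![0, 1, z] with hu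
    have e0 : u 0 = 0 := rfl
    have e1 : u 1 = 1 := rfl
    have e2 : u 2 = z := rfl
    have hzu : (u 2 - u 0) / (u 1 - u 0) = z := by rw [e0, e1, e2]; norm_num
    have hmem : u 0 ≠ u 1 ∧ u 0 ≠ u 2 ∧ u 1 ≠ u 2 ∧ (u 2 - u 0) / (u 1 - u 0) ∈ I := by
      refine ⟨?_, ?_, ?_, by rw [hzu]; exact hz⟩
      · rw [e0, e1]; norm_num
      · rw [e0, e2]; exact fun hh => hz0 hh.symm
      · rw [e1, e2]; exact fun hh => hz1 hh.symm
    have hdz12 : DifferentiableAt ℝ F12 ((u 2 - u 0) / (u 1 - u 0)) := by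
      rw [hzu]; exact hF12.differentiableAt (hIopen.mem_nhds hz)
    have hdz13 : DifferentiableAt ℝ F13 ((u 2 - u 0) / (u 1 - u 0)) := by
      rw [hzu]; exact hF13.differentiableAt (hIopen.mem_nhds hz)
    have hdz23 : DifferentiableAt ℝ F23 ((u 2 - u 0) / (u 1 - u 0)) := by
      rw [hzu]; exact hF23.differentiableAt (hIopen.mem_nhds hz)
    have HA := (eqvA F12 F13 F23 u hmem.1 hmem.2.1 hmem.2.2.1 hdz12).mp
      (h u hmem 0 1 2 (by decide) (by decide) (by decide))
    have HB := (eqvB F12 F13 F23 u hmem.1 hmem.2.1 hmem.2.2.1 hdz13).mp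
      (h u hmem 0 2 1 (by decide) (by decide) (by decide))
    have HC := (eqvC F12 F13 F23 u hmem.1 hmem.2.1 hmem.2.2.1 hdz23).mp
      (h u hmem 1 2 0 (by decide) (by decide) (by decide))
    rw [hzu] at HA HB HC
    exact ⟨HA, HB, HC⟩
  · intro h u hu i j k hij hjk hik
    obtain ⟨h01, h02, h12, hzI⟩ := hu
    have hdz12 : DifferentiableAt ℝ F12 ((u 2 - u 0) / (u 1 - u 0)) :=
      hF12.differentiableAt (hIopen.mem_nhds hzI)
    have hdz13 : DifferentiableAt ℝ F13 ((u 2 - u 0) / (u 1 - u 0)) :=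
      hF13.differentiableAt (hIopen.mem_nhds hzI)
    have hdz23 : DifferentiableAt ℝ F23 ((u 2 - u 0) / (u 1 - u 0)) :=
      hF23.differentiableAt (hIopen.mem_nhds hzI)
    obtain ⟨hODE1, hODE2, hODE3⟩ := h _ hzI
    have HA := (eqvA F12 F13 F23 u h01 h02 h12 hdz12).mpr hODE1
    have HB := (eqvB F12 F13 F23 u h01 h02 h12 hdz13).mpr hODE2
    have HC := (eqvC F12 F13 F23 u h01 h02 h12 hdz23).mpr hODE3
    have HA' : pd3 (rotCoeff F12 F13 F23 1 0) 2 u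
        = rotCoeff F12 F13 F23 1 2 u * rotCoeff F12 F13 F23 2 0 u := by
      rw [rotCoeff_comm F12 F13 F23 1 0, rotCoeff_comm F12 F13 F23 1 2,
        rotCoeff_comm F12 F13 F23 2 0, mul_comm]; exact HA
    have HB' : pd3 (rotCoeff F12 F13 F23 2 0) 1 u
        = rotCoeff F12 F13 F23 2 1 u * rotCoeff F12 F13 F23 1 0 u := by
      rw [rotCoeff_comm F12 F13 F23 2 0, rotCoeff_comm F12 F13 F23 2 1,
        rotCoeff_comm F12 F13 F23 1 0, mul_comm]; exact HB
    have HC' : pd3 (rotCoeff F12 F13 F23 2 1) 0 u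
        = rotCoeff F12 F13 F23 2 0 u * rotCoeff F12 F13 F23 0 1 u := by
      rw [rotCoeff_comm F12 F13 F23 2 1, rotCoeff_comm F12 F13 F23 2 0,
        rotCoeff_comm F12 F13 F23 0 1, mul_comm]; exact HC
    fin_cases i <;> fin_cases j <;> fin_cases k <;>
      first
        | exact absurd rfl hij
        | exact absurd rfl hjk
        | exact absurd rfl hik
        | exact HA
        | exact HB
        | exact HC
        | exact HA'
        | exact HB'
        | exact HC'
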